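/- Under the same setting (target path p with tangent angle θ_r, curvature κ_r = θ_r', frame e'_1, e'_2; plant position q with q̇ = v(cos θ_o, sin θ_o); differentiable s_r; q'(t) = q(t) − p(s_r(t))), the normal component μ(t) = q'(t) · e'_2(s_r(t)) is differentiable and satisfies μ̇(t) = v(t) sin(θ_o(t) − θ_r(s_r(t))) − κ_r(s_r(t)) ṡ_r(t) · (q'(t) · e'_1(s_r(t))) for all t ∈ [t₀,t₁]. -/

import Mathlib

/-! By the product rule, `μ̇ = (q̇ - ṡ_r e'_1) ⬝ e'_2 + q' ⬝ (d/dt e'_2(s_r))`. The frame is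
orthonormal, so `e'_1 ⬝ e'_2 = 0`; rotating the frame gives `d/dt e'_2(s_r) = -κ_r ṡ_r e'_1`; and
`q̇ ⬝ e'_2 = v sin (θ_o - θ_r)` by the subtraction formula for the sine. -/

def dot (a b : ℝ × ℝ) : ℝ := a.1 * b.1 + a.2 * b.2

open Real

section ProdComponents

variable {𝕜 E F : Type*} [NontriviallyNormedField 𝕜] [NormedAddCommGroup E] [NormedSpace 𝕜 E]
  [NormedAddCommGroup F] [NormedSpace 𝕜 F] {f : 𝕜 → E × F} {f' : E × F} {s : Set 𝕜} {x : 𝕜}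

theorem HasDerivWithinAt.fst (hf : HasDerivWithinAt f f' s x) :
    HasDerivWithinAt (fun t => (f t).1) f'.1 s x :=
  (ContinuousLinearMap.fst 𝕜 E F).hasFDerivAt.comp_hasDerivWithinAt x hf

theorem HasDerivWithinAt.snd (hf : HasDerivWithinAt f f' s x) :
    HasDerivWithinAt (fun t => (f t).2) f'.2 s x :=
  (ContinuousLinearMap.snd 𝕜 E F).hasFDerivAt.comp_hasDerivWithinAt x hf

end ProdComponents

theorem hasDerivWithinAt_dot {f g : ℝ → ℝ × ℝ} {f' g' : ℝ × ℝ} {s : Set ℝ} {x : ℝ}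
    (hf : HasDerivWithinAt f f' s x) (hg : HasDerivWithinAt g g' s x) :
    HasDerivWithinAt (fun t => dot (f t) (g t)) (dot f' (g x) + dot (f x) g') s x :=
  ((hf.fst.mul hg.fst).add (hf.snd.mul hg.snd)).congr_deriv (by simp only [dot]; ring)

theorem hasDerivWithinAt_unitNormal {φ : ℝ → ℝ} {φ' : ℝ} {s : Set ℝ} {x : ℝ}
    (hφ : HasDerivWithinAt φ φ' s x) :
    HasDerivWithinAt (fun t => (-sin (φ t), cos (φ t)))
      (-φ' • (cos (φ x), sin (φ x))) s x :=
  (hφ.sin.neg.prodMk hφ.cos).congr_deriv <| by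
    ext <;> simp only [neg_mul, neg_smul, Prod.smul_mk, smul_eq_mul, Prod.neg_mk] <;> ring

theorem dot_sub_left (a b c : ℝ × ℝ) : dot (a - b) c = dot a c - dot b c := by
  simp only [dot, Prod.fst_sub, Prod.snd_sub]; ring

theorem dot_smul_left (r : ℝ) (a b : ℝ × ℝ) : dot (r • a) b = r * dot a b := by
  simp only [dot, Prod.smul_fst, Prod.smul_snd, smul_eq_mul]; ring

theorem dot_smul_right (r : ℝ) (a b : ℝ × ℝ) : dot a (r • b) = r * dot a b := by
  simp only [dot, Prod.smul_fst, Prod.smul_snd, smul_eq_mul]; ring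

theorem dot_unitTangent_unitNormal (α β : ℝ) :
    dot (cos α, sin α) (-sin β, cos β) = sin (α - β) := by
  simp only [dot, sin_sub]; ring

/-- time derivative of the normal component
`μ(t) = q'(t) ⬝ e'_2(s_r(t))` of the vector `q'(t) = q(t) − p(s_r(t))`:
`μ̇ = v sin(θ_o − θ_r(s_r)) − κ_r(s_r) ṡ_r (q' ⬝ e'_1(s_r))`. -/
theorem normal_component_derivative
    (θr : ℝ → ℝ) (hθr : Differentiable ℝ θr)
    (κr : ℝ → ℝ) (hκr : ∀ s, κr s = deriv θr s)
    (e1 e2 : ℝ → ℝ × ℝ)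
    (he1 : ∀ s, e1 s = (Real.cos (θr s), Real.sin (θr s)))
    (he2 : ∀ s, e2 s = (-Real.sin (θr s), Real.cos (θr s)))
    (p : ℝ → ℝ × ℝ) (hp : ∀ s, HasDerivAt p (e1 s) s)
    (t0 t1 : ℝ)
    (q : ℝ → ℝ × ℝ) (v θo : ℝ → ℝ)
    (hq : ∀ t ∈ Set.Icc t0 t1,
      HasDerivWithinAt q (v t • (Real.cos (θo t), Real.sin (θo t))) (Set.Icc t0 t1) t)
    (sr sr' : ℝ → ℝ)
    (hsr : ∀ t ∈ Set.Icc t0 t1, HasDerivWithinAt sr (sr' t) (Set.Icc t0 t1) t) :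
    ∀ t ∈ Set.Icc t0 t1,
      HasDerivWithinAt (fun t => dot (q t - p (sr t)) (e2 (sr t)))
        (v t * Real.sin (θo t - θr (sr t)) -
          κr (sr t) * sr' t * dot (q t - p (sr t)) (e1 (sr t)))
        (Set.Icc t0 t1) t := by
  obtain rfl : κr = deriv θr := funext hκr
  obtain rfl : e1 = _ := funext he1
  obtain rfl : e2 = _ := funext he2
  intro t ht
  have hθ := (hθr (sr t)).hasDerivAt.comp_hasDerivWithinAt t (hsr t ht)
  have hp := (hp (sr t)).scomp_hasDerivWithinAt t (hsr t ht)
  refine (hasDerivWithinAt_dot ((hq t ht).sub hp) (hasDerivWithinAt_unitNormal hθ)).congr_deriv ?_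
  simp only [dot_sub_left, dot_smul_left, dot_smul_right, dot_unitTangent_unitNormal,
    sub_self, sin_zero, Pi.sub_apply, Function.comp_apply]
  ring
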